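/- In the Example-2 game, the pure stationary strategy pair (p,q) = (1,1) (both players play their first action at state 1) is a β-Nash equilibrium for every β ∈ [0.6, 1); hence it is a Blackwell–Nash equilibrium. -/
import Mathlib


open Matrix Set

noncomputable section

/-- Transition matrix of the Example-2 game. -/
def ex2P (p q : ℝ) : Matrix (Fin 2) (Fin 2) ℝ :=
  !![p*q + (1-p)*(1-q), p*(1-q) + (1-p)*q; 0, 1]

/-- Expected one-step reward vector of player 1 in the Example-2 game. -/
def ex2r1 (p q : ℝ) : Fin 2 → ℝ :=
  ![4*p*q + 4*p*(1-q) + 5*(1-p)*q + 3*(1-p)*(1-q), 3]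

/-- Expected one-step reward vector of player 2 in the Example-2 game. -/
def ex2r2 (p q : ℝ) : Fin 2 → ℝ :=
  ![4.4*p*q + 5*p*(1-q) + 6*(1-p)*q + 2*(1-p)*(1-q), 4]

/-- Discounted value vector of player 1. -/
def ex2v1 (β p q : ℝ) : Fin 2 → ℝ :=
  ((1 : Matrix (Fin 2) (Fin 2) ℝ) - β • ex2P p q)⁻¹.mulVec (ex2r1 p q)

/-- Discounted value vector of player 2. -/
def ex2v2 (β p q : ℝ) : Fin 2 → ℝ :=
  ((1 : Matrix (Fin 2) (Fin 2) ℝ) - β • ex2P p q)⁻¹.mulVec (ex2r2 p q)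

/-- `(p,q)` is a β-Nash equilibrium of the Example-2 game. -/
def ex2IsNash (β p q : ℝ) : Prop :=
  p ∈ Icc (0:ℝ) 1 ∧ q ∈ Icc (0:ℝ) 1 ∧
  (∀ p' ∈ Icc (0:ℝ) 1, ∀ s, ex2v1 β p' q s ≤ ex2v1 β p q s) ∧
  (∀ q' ∈ Icc (0:ℝ) 1, ∀ s, ex2v2 β p q' s ≤ ex2v2 β p q s)

lemma tri_inv (a b c : ℝ) (ha : a ≠ 0) (hc : c ≠ 0) :
    (!![a, b; 0, c] : Matrix (Fin 2) (Fin 2) ℝ)⁻¹ = !![1/a, -b/(a*c); 0, 1/c] := by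
  apply Matrix.inv_eq_right_inv
  ext i j
  fin_cases i <;> fin_cases j <;>
    simp [Matrix.mul_apply, Fin.sum_univ_two] <;> field_simp <;> ring

lemma key_inv (β p : ℝ) (hβ0 : 0 ≤ β) (hβ1 : β < 1) (hp0 : 0 ≤ p) (hp1 : p ≤ 1) :
    ((1 : Matrix (Fin 2) (Fin 2) ℝ) - β • ex2P p 1)⁻¹ =
      !![1/(1-β*p), β*(1-p)/((1-β*p)*(1-β)); 0, 1/(1-β)] := by
  have hbp : β * p < 1 := lt_of_le_of_lt (by nlinarith) hβ1
  have ha : (1 - β*p) ≠ 0 := by linarith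
  have hc : (1 - β) ≠ 0 := by linarith
  have hM : ((1 : Matrix (Fin 2) (Fin 2) ℝ) - β • ex2P p 1) =
      !![1-β*p, -(β*(1-p)); 0, 1-β] := by
    ext i j
    fin_cases i <;> fin_cases j <;> simp [ex2P, Matrix.one_apply] <;> ring
  rw [hM, tri_inv _ _ _ ha hc]
  congr 1
  ring

/-- In the Example-2 game the pure pair `(1,1)` is a β-Nash equilibrium for every
`β ∈ [0.6, 1)`; hence it is a Blackwell–Nash equilibrium. -/
theorem ex2_BNE : ∀ β ∈ Ico (0.6:ℝ) 1, ex2IsNash β 1 1 := by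
  rintro β ⟨hβl, hβu⟩
  have hβ0 : (0:ℝ) ≤ β := by norm_num at hβl ⊢; linarith
  have hc : (0:ℝ) < 1 - β := by linarith
  refine ⟨⟨zero_le_one, le_refl 1⟩, ⟨zero_le_one, le_refl 1⟩, ?_, ?_⟩
  · rintro p ⟨hp0, hp1⟩ s
    have hbp : β * p < 1 := lt_of_le_of_lt (by nlinarith) hβu
    have ha : (0:ℝ) < 1 - β*p := by linarith
    have h1 : ex2v1 β p 1 = fun s => ![(5-p)/(1-β*p) + 3*(β*(1-p)/((1-β*p)*(1-β))), 3/(1-β)] s := by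
      funext s
      rw [ex2v1, key_inv β p hβ0 hβu hp0 hp1]
      fin_cases s <;>
        simp [ex2r1, Matrix.mulVec, dotProduct, Fin.sum_univ_two] <;> ring
    have h2 : ex2v1 β 1 1 = fun s => ![4/(1-β), 3/(1-β)] s := by
      funext s
      rw [ex2v1, key_inv β 1 hβ0 hβu zero_le_one le_rfl]
      fin_cases s <;>
        simp [ex2r1, Matrix.mulVec, dotProduct, Fin.sum_univ_two] <;> ring
    rw [h1, h2]
    fin_cases s
    · show (5-p)/(1-β*p) + 3*(β*(1-p)/((1-β*p)*(1-β))) ≤ 4/(1-β)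
      rw [← sub_nonneg]
      have key : 4/(1-β) - ((5-p)/(1-β*p) + 3*(β*(1-p)/((1-β*p)*(1-β)))) =
          ((1-p)*(2*β-1))/((1-β*p)*(1-β)) := by
        field_simp
        ring
      rw [key]
      apply div_nonneg
      · have : (0:ℝ) ≤ 2*β - 1 := by norm_num at hβl; linarith
        exact mul_nonneg (by linarith) this
      · positivity
    · exact le_refl _
  · rintro q ⟨hq0, hq1⟩ s
    have hbp : β * q < 1 := lt_of_le_of_lt (by nlinarith) hβu
    have ha : (0:ℝ) < 1 - β*q := by linarith
    have h1 : ex2v2 β 1 q = fun s => ![(5-0.6*q)/(1-β*q) + 4*(β*(1-q)/((1-β*q)*(1-β))), 4/(1-β)] s := by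
      funext s
      have hPe : ex2P 1 q = ex2P q 1 := by
        ext i j; fin_cases i <;> fin_cases j <;> simp [ex2P] <;> ring
      rw [ex2v2, hPe, key_inv β q hβ0 hβu hq0 hq1]
      fin_cases s <;>
        simp [ex2r2, Matrix.mulVec, dotProduct, Fin.sum_univ_two] <;> ring
    have h2 : ex2v2 β 1 1 = fun s => ![4.4/(1-β), 4/(1-β)] s := by
      funext s
      rw [ex2v2, key_inv β 1 hβ0 hβu zero_le_one le_rfl]
      fin_cases s <;>
        simp [ex2r2, Matrix.mulVec, dotProduct, Fin.sum_univ_two] <;> ring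
    rw [h1, h2]
    fin_cases s
    · show (5-0.6*q)/(1-β*q) + 4*(β*(1-q)/((1-β*q)*(1-β))) ≤ 4.4/(1-β)
      rw [← sub_nonneg]
      have key : 4.4/(1-β) - ((5-0.6*q)/(1-β*q) + 4*(β*(1-q)/((1-β*q)*(1-β)))) =
          ((1-q)*(β-0.6))/((1-β*q)*(1-β)) := by
        field_simp
        ring
      rw [key]
      apply div_nonneg
      · have : (0:ℝ) ≤ β - 0.6 := by linarith
        exact mul_nonneg (by linarith) this
      · positivity
    · exact le_refl _


end
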